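/- Let α₁ = (0 3 2)(1 4 5)(6 8 9)(7 10 11), α₂ = (0 4)(1 2)(3 5)(6 10)(7 9)(8 11), α₃ = (0 9)(1 11)(2 8)(3 6)(4 7)(5 10) be permutations of {0,…,11}. Then α₁, α₂, α₃ pairwise commute, and the subgroup of the symmetric group on 12 letters that they generate is an abelian group of order 12 isomorphic to ℤ/2 × ℤ/2 × ℤ/3. -/

import Mathlib

/-! The generators commute, α₂ and α₃ are distinct involutions and α₁ has order 3, so
`(i, j, k) ↦ α₂ ^ i * α₃ ^ j * α₁ ^ k` is a homomorphism `ℤ/2 × ℤ/2 × ℤ/3 → S₁₂` onto the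
generated subgroup. It is injective because `⟨α₂⟩ ∩ ⟨α₃⟩ = 1` (a subgroup of a group of prime
order not containing its generator) and `⟨α₂, α₃⟩ ∩ ⟨α₁⟩ = 1` (orders dividing 4 and 3). -/

open Equiv

/-- α₁ = (0 3 2)(1 4 5)(6 8 9)(7 10 11) -/
def ko1Alpha1 : Equiv.Perm (Fin 12) :=
  (swap 0 3 * swap 3 2) * (swap 1 4 * swap 4 5) * (swap 6 8 * swap 8 9) *
    (swap 7 10 * swap 10 11)

/-- α₂ = (0 4)(1 2)(3 5)(6 10)(7 9)(8 11) -/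
def ko1Alpha2 : Equiv.Perm (Fin 12) :=
  swap 0 4 * swap 1 2 * swap 3 5 * swap 6 10 * swap 7 9 * swap 8 11

/-- α₃ = (0 9)(1 11)(2 8)(3 6)(4 7)(5 10) -/
def ko1Alpha3 : Equiv.Perm (Fin 12) :=
  swap 0 9 * swap 1 11 * swap 2 8 * swap 3 6 * swap 4 7 * swap 5 10

open Subgroup

section
variable {G : Type*} [Group G] {a b c : G}

noncomputable def zmodOrderOfHom (g : G) : Multiplicative (ZMod (orderOf g)) →* G :=
  (zpowers g).subtype.comp
    (zmodMulEquivOfGenerator (g := ⟨g, mem_zpowers g⟩)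
      (by rintro ⟨_, k, rfl⟩; exact ⟨k, Subtype.ext (by simp)⟩) (Nat.card_zpowers g)).toMonoidHom

lemma zmodOrderOfHom_injective (g : G) : Function.Injective (zmodOrderOfHom g) :=
  (zpowers g).subtype_injective.comp (MulEquiv.injective _)

lemma range_zmodOrderOfHom (g : G) : (zmodOrderOfHom g).range = zpowers g := by
  rw [zmodOrderOfHom, MonoidHom.range_comp, MonoidHom.range_eq_top.mpr (MulEquiv.surjective _),
    ← MonoidHom.range_eq_map, range_subtype]

lemma commute_zmodOrderOfHom (h : Commute a b) (x : Multiplicative (ZMod (orderOf a)))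
    (y : Multiplicative (ZMod (orderOf b))) :
    Commute (zmodOrderOfHom a x) (zmodOrderOfHom b y) := by
  have hx : zmodOrderOfHom a x ∈ zpowers a := range_zmodOrderOfHom a ▸ ⟨x, rfl⟩
  have hy : zmodOrderOfHom b y ∈ zpowers b := range_zmodOrderOfHom b ▸ ⟨y, rfl⟩
  obtain ⟨i, hi⟩ := mem_zpowers_iff.mp hx
  obtain ⟨j, hj⟩ := mem_zpowers_iff.mp hy
  rw [← hi, ← hj]
  exact h.zpow_zpow i j

noncomputable def zmodOrderOfHom₂ (h : Commute a b) :
    Multiplicative (ZMod (orderOf a)) × Multiplicative (ZMod (orderOf b)) →* G :=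
  (zmodOrderOfHom a).noncommCoprod (zmodOrderOfHom b) (commute_zmodOrderOfHom h)

lemma range_zmodOrderOfHom₂ (h : Commute a b) :
    (zmodOrderOfHom₂ h).range = zpowers a ⊔ zpowers b := by
  rw [zmodOrderOfHom₂, MonoidHom.noncommCoprod_range, range_zmodOrderOfHom, range_zmodOrderOfHom]

lemma card_sup_zpowers_dvd (h : Commute a b) :
    Nat.card ↥(zpowers a ⊔ zpowers b) ∣ orderOf a * orderOf b := by
  have hcard (g : G) : Nat.card (Multiplicative (ZMod (orderOf g))) = orderOf g :=
    (Nat.card_congr Multiplicative.toAdd).trans (Nat.card_zmod _)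
  rw [← range_zmodOrderOfHom₂ h]
  simpa only [Nat.card_prod, hcard] using card_range_dvd (zmodOrderOfHom₂ h)

lemma disjoint_zpowers_of_prime_orderOf (ha : (orderOf a).Prime) (hab : a ∉ zpowers b) :
    Disjoint (zpowers a) (zpowers b) := by
  have : Finite (zpowers a) := Nat.finite_of_card_ne_zero (Nat.card_zpowers a ▸ ha.ne_zero)
  rw [disjoint_iff, ← card_eq_one]
  have hdvd : Nat.card ↥(zpowers a ⊓ zpowers b) ∣ orderOf a :=
    Nat.card_zpowers a ▸ card_dvd_of_le inf_le_left
  refine (ha.eq_one_or_self_of_dvd _ hdvd).resolve_right fun hcard => hab ?_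
  have : zpowers a ⊓ zpowers b = zpowers a :=
    eq_of_le_of_card_ge inf_le_left (hcard ▸ (Nat.card_zpowers a).le)
  exact inf_eq_left.mp this (mem_zpowers a)

lemma disjoint_sup_zpowers_of_coprime (hab : Commute a b)
    (h : (orderOf a * orderOf b).Coprime (orderOf c)) :
    Disjoint (zpowers a ⊔ zpowers b) (zpowers c) := by
  refine disjoint_of_coprime_natCard ?_
  rw [Nat.card_zpowers]
  exact h.coprime_dvd_left (card_sup_zpowers_dvd hab)

lemma zmodOrderOfHom₂_injective (h : Commute a b) (hd : Disjoint (zpowers a) (zpowers b)) :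
    Function.Injective (zmodOrderOfHom₂ h) :=
  (MonoidHom.noncommCoprod_injective _ _ _).mpr ⟨zmodOrderOfHom_injective a,
    zmodOrderOfHom_injective b, by rwa [range_zmodOrderOfHom, range_zmodOrderOfHom]⟩

theorem nonempty_closure_mulEquiv_zmod_prod (hab : Commute a b) (hac : Commute a c)
    (hbc : Commute b c) (hdab : Disjoint (zpowers a) (zpowers b))
    (hdc : Disjoint (zpowers a ⊔ zpowers b) (zpowers c)) :
    Nonempty (closure {a, b, c} ≃*
      Multiplicative (ZMod (orderOf a) × ZMod (orderOf b) × ZMod (orderOf c))) := by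
  let φ := (zmodOrderOfHom₂ hab).noncommCoprod (zmodOrderOfHom c) fun x y =>
    (commute_zmodOrderOfHom hac x.1 y).mul_left (commute_zmodOrderOfHom hbc x.2 y)
  have hinj : Function.Injective φ :=
    (MonoidHom.noncommCoprod_injective _ _ _).mpr ⟨zmodOrderOfHom₂_injective hab hdab,
      zmodOrderOfHom_injective c, by rwa [range_zmodOrderOfHom₂, range_zmodOrderOfHom]⟩
  have hrange : φ.range = closure {a, b, c} := by
    rw [show φ.range = _ from MonoidHom.noncommCoprod_range _ _ _, range_zmodOrderOfHom₂,
      range_zmodOrderOfHom, zpowers_eq_closure, zpowers_eq_closure, zpowers_eq_closure,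
      ← Subgroup.closure_union, ← Subgroup.closure_union, Set.insert_eq, Set.insert_eq, Set.union_assoc]
  exact ⟨((MonoidHom.ofInjective hinj).trans (MulEquiv.subgroupCongr hrange)).symm.trans <|
    MulEquiv.prodAssoc.trans <|
      ((MulEquiv.refl _).prodCongr (MulEquiv.prodMultiplicative _ _).symm).trans
        (MulEquiv.prodMultiplicative _ _).symm⟩

end

theorem stmt11 :
    ko1Alpha1 * ko1Alpha2 = ko1Alpha2 * ko1Alpha1 ∧
    ko1Alpha1 * ko1Alpha3 = ko1Alpha3 * ko1Alpha1 ∧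
    ko1Alpha2 * ko1Alpha3 = ko1Alpha3 * ko1Alpha2 ∧
    Nat.card (Subgroup.closure
        ({ko1Alpha1, ko1Alpha2, ko1Alpha3} : Set (Equiv.Perm (Fin 12)))) = 12 ∧
    Nonempty ((Subgroup.closure
        ({ko1Alpha1, ko1Alpha2, ko1Alpha3} : Set (Equiv.Perm (Fin 12)))) ≃*
      Multiplicative (ZMod 2 × ZMod 2 × ZMod 3)) := by
  have h12 : ko1Alpha1 * ko1Alpha2 = ko1Alpha2 * ko1Alpha1 := by decide
  have h13 : ko1Alpha1 * ko1Alpha3 = ko1Alpha3 * ko1Alpha1 := by decide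
  have h23 : ko1Alpha2 * ko1Alpha3 = ko1Alpha3 * ko1Alpha2 := by decide
  have ord1 : orderOf ko1Alpha1 = 3 := orderOf_eq_prime (by decide) (by decide)
  have ord2 : orderOf ko1Alpha2 = 2 := orderOf_eq_prime (by decide) (by decide)
  have ord3 : orderOf ko1Alpha3 = 2 := orderOf_eq_prime (by decide) (by decide)
  have hd23 : Disjoint (zpowers ko1Alpha2) (zpowers ko1Alpha3) :=
    disjoint_zpowers_of_prime_orderOf (ord2 ▸ Nat.prime_two)
      (by rw [mem_zpowers_iff_mem_range_orderOf, ord3]; decide)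
  have hd1 : Disjoint (zpowers ko1Alpha2 ⊔ zpowers ko1Alpha3) (zpowers ko1Alpha1) :=
    disjoint_sup_zpowers_of_coprime h23 (by rw [ord1, ord2, ord3]; norm_num)
  have hset : ({ko1Alpha2, ko1Alpha3, ko1Alpha1} : Set (Equiv.Perm (Fin 12))) =
      {ko1Alpha1, ko1Alpha2, ko1Alpha3} := by
    rw [Set.pair_comm, Set.insert_comm]
  obtain ⟨e⟩ := nonempty_closure_mulEquiv_zmod_prod h23 h12.symm h13.symm hd23 hd1
  rw [ord1, ord2, ord3, hset] at e
  exact ⟨h12, h13, h23, by rw [Nat.card_congr e.toEquiv, Nat.card_eq_fintype_card]; rfl, ⟨e⟩⟩
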